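/- (Elementary symmetric function in Macdonald basis) For n ≥ 1, e_n(X) = ∑_{μ ⊢ n} (1-q)(1-t) H̃_μ(X;q,t) Π'_μ(q,t) B_μ(q,t) / w_μ(q,t). -/

import Mathlib

open Finset MvPolynomial

/-- The field ℚ(q,t). -/
noncomputable abbrev K2 : Type := FractionRing (MvPolynomial (Fin 2) ℚ)

noncomputable def qV : K2 := algebraMap (MvPolynomial (Fin 2) ℚ) K2 (MvPolynomial.X 0)
noncomputable def tV : K2 := algebraMap (MvPolynomial (Fin 2) ℚ) K2 (MvPolynomial.X 1)

/-- The ring of symmetric functions over K2: `X k` represents the power sum p_k (k ≥ 1). -/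
abbrev SymF2 : Type := MvPolynomial ℕ K2

/-- Symmetric functions in two independent alphabets X, Y:
`X (k,false)` is p_k(X) and `X (k,true)` is p_k(Y). -/
abbrev SymT : Type := MvPolynomial (ℕ × Bool) K2

/-- p_ρ. -/
noncomputable def pProd (s : Multiset ℕ) : SymF2 := (s.map MvPolynomial.X).prod

/-- z_ρ. -/
noncomputable def zCoef (s : Multiset ℕ) : K2 :=
  (s.map (fun i : ℕ => (i : K2))).prod * ∏ i ∈ s.toFinset, ((s.count i).factorial : K2)

/-- Elementary symmetric function e_n = ∑_{ρ⊢n} (-1)^{n-ℓ(ρ)} p_ρ/z_ρ. -/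
noncomputable def eSym (n : ℕ) : SymF2 :=
  ∑ ρ : Nat.Partition n,
    ((-1 : K2) ^ (n - Multiset.card ρ.parts) * (zCoef ρ.parts)⁻¹) • pProd ρ.parts

/-- Plethystic evaluation: the algebra map sending p_k to A k. -/
noncomputable def plEval (A : ℕ → K2) : SymF2 →ₐ[K2] K2 := MvPolynomial.aeval A

/-- The copy of a symmetric function in the X alphabet. -/
noncomputable def embX : SymF2 →ₐ[K2] SymT :=
  MvPolynomial.aeval (fun k : ℕ => (MvPolynomial.X (k, false) : SymT))

/-- The copy of a symmetric function in the Y alphabet. -/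
noncomputable def embY : SymF2 →ₐ[K2] SymT :=
  MvPolynomial.aeval (fun k : ℕ => (MvPolynomial.X (k, true) : SymT))

/-- The parts of a partition as a weakly decreasing list. -/
def partsList {n : ℕ} (μ : n.Partition) : List ℕ := (μ.parts.sort (· ≤ ·)).reverse

def pRowLen {n : ℕ} (μ : n.Partition) (i : ℕ) : ℕ := (partsList μ).getD i 0
def pColLen {n : ℕ} (μ : n.Partition) (j : ℕ) : ℕ :=
  Multiset.card (μ.parts.filter (fun p => j < p))

/-- The cells (i,j) of the Young diagram of μ; the coarm of (i,j) is j and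
the coleg is i. -/
def pCells {n : ℕ} (μ : n.Partition) : Finset (ℕ × ℕ) :=
  (Finset.range n ×ˢ Finset.range n).filter (fun c => c.2 < pRowLen μ c.1)

def pArm {n : ℕ} (μ : n.Partition) (c : ℕ × ℕ) : ℕ := pRowLen μ c.1 - c.2 - 1
def pLeg {n : ℕ} (μ : n.Partition) (c : ℕ × ℕ) : ℕ := pColLen μ c.2 - c.1 - 1

/-- p_k[M] = (1-q^k)(1-t^k). -/
noncomputable def pM (k : ℕ) : K2 := (1 - qV ^ k) * (1 - tV ^ k)

/-- B_μ(q,t) = ∑_{c∈μ} q^{a'(c)} t^{l'(c)}. -/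
noncomputable def Bmu {n : ℕ} (μ : n.Partition) : K2 := ∑ c ∈ pCells μ, qV ^ c.2 * tV ^ c.1

/-- Π'_μ(q,t) = ∏_{c∈μ, c≠(0,0)} (1 - q^{a'(c)} t^{l'(c)}). -/
noncomputable def PiMu {n : ℕ} (μ : n.Partition) : K2 :=
  ∏ c ∈ (pCells μ).erase (0, 0), (1 - qV ^ c.2 * tV ^ c.1)

/-- w_μ(q,t) = ∏_{c∈μ}(q^{a(c)} - t^{l(c)+1})(t^{l(c)} - q^{a(c)+1}). -/
noncomputable def wMu {n : ℕ} (μ : n.Partition) : K2 :=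
  ∏ c ∈ pCells μ, ((qV ^ pArm μ c - tV ^ (pLeg μ c + 1)) * (tV ^ pLeg μ c - qV ^ (pArm μ c + 1)))

/-! Put `Y = M` in the Cauchy formula. Since `p_k[XY/M]` becomes `p_k[X] p_k[M] / p_k[M] = p_k[X]`
(the evaluations `p_k[M] = (1 - q^k)(1 - t^k)` are nonzero for `k ≥ 1`), the left side becomes `e_n[X]`,
while the right side becomes `∑_μ H̃_μ[X] H̃_μ[M] / w_μ`; the evaluation `H̃_μ[M] = M B_μ Π'_μ` finishes. -/

lemma algebraMap_X_pow_ne_one {σ R K : Type*} [CommRing R] [Nontrivial R] [CommRing K]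
    [Algebra (MvPolynomial σ R) K] [IsFractionRing (MvPolynomial σ R) K] (i : σ) {k : ℕ}
    (hk : k ≠ 0) : algebraMap (MvPolynomial σ R) K (X i) ^ k ≠ 1 := by
  rw [← map_pow, ← map_one (algebraMap (MvPolynomial σ R) K),
    (IsFractionRing.injective (MvPolynomial σ R) K).ne_iff]
  intro h
  simpa [hk] using congrArg (eval fun _ => (0 : R)) h

lemma pM_ne_zero {k : ℕ} (hk : k ≠ 0) : pM k ≠ 0 :=
  mul_ne_zero (sub_ne_zero.mpr (algebraMap_X_pow_ne_one 0 hk).symm)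
    (sub_ne_zero.mpr (algebraMap_X_pow_ne_one 1 hk).symm)

lemma aeval_eSym_of_eq_X {g : ℕ → SymF2} (hg : ∀ k, 0 < k → g k = X k) (n : ℕ) :
    aeval g (eSym n) = eSym n := by
  unfold eSym pProd
  refine (map_sum _ _ _).trans (sum_congr rfl fun ρ _ => ?_)
  rw [map_smul, map_multiset_prod, Multiset.map_map]
  congr 2
  exact Multiset.map_congr rfl fun k hk => by simpa using hg k (ρ.parts_pos hk)

/-- Specialization of the second alphabet: `p_k(Y) ↦ A k`. -/
noncomputable def specializeY (A : ℕ → K2) : SymT →ₐ[K2] SymF2 :=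
  aeval fun p => if p.2 then C (A p.1) else X p.1

lemma specializeY_embX (A : ℕ → K2) (f : SymF2) : specializeY A (embX f) = f := by
  suffices (specializeY A).comp embX = AlgHom.id K2 SymF2 from DFunLike.congr_fun this f
  exact algHom_ext fun k => by simp [specializeY, embX]

lemma specializeY_embY (A : ℕ → K2) (f : SymF2) :
    specializeY A (embY f) = C (plEval A f) := by
  suffices (specializeY A).comp embY = (Algebra.ofId K2 SymF2).comp (plEval A) from
    DFunLike.congr_fun this f
  exact algHom_ext fun k => by simp [specializeY, embY, plEval, algebraMap_eq]

lemma specializeY_aeval_eSym_div {A : ℕ → K2} (hA : ∀ k, 0 < k → A k ≠ 0) (n : ℕ) :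
    specializeY A (aeval (fun k => (A k)⁻¹ • (X (k, false) * X (k, true) : SymT)) (eSym n)) =
      eSym n := by
  rw [← AlgHom.comp_apply, comp_aeval]
  refine aeval_eSym_of_eq_X (fun k hk => ?_) n
  rw [map_smul, map_mul]
  simp only [specializeY, aeval_X, Bool.false_eq_true, if_false, if_true]
  rw [smul_eq_C_mul, mul_left_comm, ← map_mul, inv_mul_cancel₀ (hA k hk), map_one,
    mul_one]

theorem en_macdonald_expansion_general (n : ℕ)
    (Ht : n.Partition → SymF2)
    (hCauchy :
      MvPolynomial.aeval
          (fun k : ℕ => (pM k)⁻¹ • (MvPolynomial.X (k, false) * MvPolynomial.X (k, true) : SymT))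
          (eSym n) =
        ∑ μ : n.Partition, (wMu μ)⁻¹ • (embX (Ht μ) * embY (Ht μ)))
    (heval : ∀ μ : n.Partition,
      plEval pM (Ht μ) = (1 - qV) * (1 - tV) * Bmu μ * PiMu μ) :
    eSym n =
      ∑ μ : n.Partition,
        (((1 - qV) * (1 - tV) * Bmu μ * PiMu μ) / wMu μ) • Ht μ := by
  have hY := congrArg (specializeY pM) hCauchy
  rw [specializeY_aeval_eSym_div (fun k hk => pM_ne_zero hk.ne') n, map_sum] at hY
  rw [hY]
  refine sum_congr rfl fun μ _ => ?_
  rw [map_smul, map_mul, specializeY_embX, specializeY_embY, heval μ, mul_comm, ← smul_eq_C_mul,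
    smul_smul, div_eq_mul_inv, mul_comm]

/-- (Elementary symmetric function in the Macdonald basis.)  Let H̃ be a family
of symmetric functions indexed by partitions of n satisfying the Macdonald–Cauchy
formula e_n[XY/M] = ∑_{μ⊢n} H̃_μ[X] H̃_μ[Y] / w_μ and the evaluation
H̃_μ[M] = M B_μ Π'_μ.  Then for n ≥ 1,
e_n = ∑_{μ⊢n} (1-q)(1-t) H̃_μ Π'_μ B_μ / w_μ. -/
theorem en_macdonald_expansion (n : ℕ) (hn : 1 ≤ n)
    (Ht : n.Partition → SymF2)
    (hCauchy :
      MvPolynomial.aeval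
          (fun k : ℕ => (pM k)⁻¹ • (MvPolynomial.X (k, false) * MvPolynomial.X (k, true) : SymT))
          (eSym n) =
        ∑ μ : n.Partition, (wMu μ)⁻¹ • (embX (Ht μ) * embY (Ht μ)))
    (heval : ∀ μ : n.Partition,
      plEval pM (Ht μ) = (1 - qV) * (1 - tV) * Bmu μ * PiMu μ) :
    eSym n =
      ∑ μ : n.Partition,
        (((1 - qV) * (1 - tV) * Bmu μ * PiMu μ) / wMu μ) • Ht μ :=
  en_macdonald_expansion_general n Ht hCauchy heval
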